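/- arXiv:1305.2378 — 3 statements merged into one kernel-verified Lean document; each statement's English description precedes it below -/
import Mathlib

section
/- Define E[s^{υ_n}] := π_{1,n} + ∑_{k=2}^{n-1} π_{k,n} ∏_{i=1}^{k-1} (1 − 2/(i+1) + s·2/(i+1)) with π_{k,n} = 2(n+1)/((n−1)(k+2)(k+1)). Then for n ≥ 2 and 0 < s ≠ 3/2, this equals (1/((n−1)(3−2s)))·((n+1) − 2/(n·b_{n-1,2s-1})), where b_{m,y} = Γ(m+1)Γ(y+1)/Γ(m+y+1). -/
lemma prodc (s : ℝ) (hs : 0 < s) (k : ℕ) :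
    ∏ i ∈ Finset.Icc 1 k, (1 - 2 / ((i : ℝ) + 1) + s * (2 / ((i : ℝ) + 1)))
      = Real.Gamma ((k : ℝ) + 2 * s) / (Real.Gamma (2 * s) * (k + 1).factorial) := by
  induction k with
  | zero =>
    have h2 : Real.Gamma (2*s) ≠ 0 := (Real.Gamma_pos_of_pos (by linarith)).ne'
    simp [div_self h2]
  | succ k ih =>
    rw [Finset.prod_Icc_succ_top (by omega), ih]
    have hpos : (0:ℝ) < (k:ℝ) + 2*s := by positivity
    have hG : Real.Gamma ((k:ℝ) + 2*s + 1) = ((k:ℝ)+2*s) * Real.Gamma ((k:ℝ)+2*s) :=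
      Real.Gamma_add_one (ne_of_gt hpos)
    have h2 : (0:ℝ) < Real.Gamma (2*s) := Real.Gamma_pos_of_pos (by linarith)
    have hf : ((k+1).factorial : ℝ) ≠ 0 := by positivity
    push_cast [Nat.factorial_succ]
    rw [show ((k:ℝ)+1) + 2*s = (k:ℝ) + 2*s + 1 by ring, hG]
    have hk1 : ((k:ℝ)+1) + 1 ≠ 0 := by positivity
    field_simp
    ring

lemma keysum (s : ℝ) (hs : 0 < s) (hs' : s ≠ 3 / 2) (m : ℕ) :
    ∑ k ∈ Finset.Icc 1 (m+1), (1/(((k:ℝ)+2)*((k:ℝ)+1))) *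
        ∏ i ∈ Finset.Icc 1 (k-1), (1 - 2 / ((i : ℝ) + 1) + s * (2 / ((i : ℝ) + 1)))
      = (((m:ℝ)+3) - 2 * Real.Gamma ((m:ℝ) + 2*s + 1) / (((m+2).factorial : ℝ) * Real.Gamma (2*s)))
          / (2*((m:ℝ)+3)*(3-2*s)) := by
  have h3 : (3:ℝ) - 2*s ≠ 0 := by
    intro h; apply hs'; linarith
  have h2 : (0:ℝ) < Real.Gamma (2*s) := Real.Gamma_pos_of_pos (by linarith)
  induction m with
  | zero =>
    have hG : Real.Gamma (2*s + 1) = (2*s) * Real.Gamma (2*s) :=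
      Real.Gamma_add_one (by positivity)
    simp only [Nat.cast_zero, zero_add]
    rw [Finset.Icc_self, Finset.sum_singleton]
    norm_num [hG]
    field_simp
  | succ m ih =>
    rw [show m + 1 + 1 = (m+1) + 1 by ring, Finset.sum_Icc_succ_top (by omega), ih]
    have hpr := prodc s hs (m+1)
    rw [show (m+1+1) - 1 = m + 1 by omega, hpr]
    have hg : (0:ℝ) < Real.Gamma ((m:ℝ) + 2*s + 1) := Real.Gamma_pos_of_pos (by positivity)
    have hG1 : Real.Gamma ((m:ℝ) + 2*s + 1 + 1) = ((m:ℝ)+2*s+1) * Real.Gamma ((m:ℝ)+2*s+1) :=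
      Real.Gamma_add_one (ne_of_gt (by positivity))
    have hf : ((m+2).factorial : ℝ) ≠ 0 := by positivity
    push_cast [Nat.factorial_succ]
    rw [show (m:ℝ)+1+2*s = (m:ℝ)+2*s+1 by ring, hG1]
    have hmf : (m.factorial : ℝ) ≠ 0 := by positivity
    field_simp
    ring

noncomputable def b (n : ℕ) (y : ℝ) : ℝ :=
  Real.Gamma (n + 1) * Real.Gamma (y + 1) / Real.Gamma (n + y + 1)

noncomputable def piKN (k n : ℕ) : ℝ :=
  2 * ((n : ℝ) + 1) / (((n : ℝ) - 1) * (k + 2) * (k + 1))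

theorem pgf_upsilon (n : ℕ) (hn : 2 ≤ n) (s : ℝ) (hs : 0 < s) (hs' : s ≠ 3 / 2) :
    piKN 1 n + ∑ k ∈ Finset.Icc 2 (n - 1),
        piKN k n * ∏ i ∈ Finset.Icc 1 (k - 1), (1 - 2 / ((i : ℝ) + 1) + s * (2 / ((i : ℝ) + 1)))
      = (1 / (((n : ℝ) - 1) * (3 - 2 * s))) * (((n : ℝ) + 1) - 2 / ((n : ℝ) * b (n - 1) (2 * s - 1))) := by
  have h3 : (3:ℝ) - 2*s ≠ 0 := by intro h; apply hs'; linarith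
  have h2 : (0:ℝ) < Real.Gamma (2*s) := Real.Gamma_pos_of_pos (by linarith)
  obtain ⟨m, rfl⟩ : ∃ m, n = m + 2 := ⟨n - 2, by omega⟩
  have hicc : Finset.Icc 1 (m+1) = insert 1 (Finset.Icc 2 (m+1)) := by
    ext x; simp only [Finset.mem_Icc, Finset.mem_insert]; omega
  have hstep : piKN 1 (m+2) + ∑ k ∈ Finset.Icc 2 (m+2-1),
        piKN k (m+2) * ∏ i ∈ Finset.Icc 1 (k - 1), (1 - 2 / ((i : ℝ) + 1) + s * (2 / ((i : ℝ) + 1)))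
      = ∑ k ∈ Finset.Icc 1 (m+1),
        piKN k (m+2) * ∏ i ∈ Finset.Icc 1 (k - 1), (1 - 2 / ((i : ℝ) + 1) + s * (2 / ((i : ℝ) + 1))) := by
    rw [hicc, Finset.sum_insert (by simp)]
    norm_num
  rw [hstep]
  have hfac : ∑ k ∈ Finset.Icc 1 (m+1),
        piKN k (m+2) * ∏ i ∈ Finset.Icc 1 (k - 1), (1 - 2 / ((i : ℝ) + 1) + s * (2 / ((i : ℝ) + 1)))
      = (2*((m:ℝ)+3)/((m:ℝ)+1)) * ∑ k ∈ Finset.Icc 1 (m+1), (1/(((k:ℝ)+2)*((k:ℝ)+1))) *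
        ∏ i ∈ Finset.Icc 1 (k - 1), (1 - 2 / ((i : ℝ) + 1) + s * (2 / ((i : ℝ) + 1))) := by
    rw [Finset.mul_sum]
    refine Finset.sum_congr rfl fun k hk => ?_
    simp only [piKN, div_eq_mul_inv, mul_inv]
    push_cast
    ring
  rw [hfac, keysum s hs hs' m]
  have hb : b (m+2-1) (2*s-1) = ((m+1).factorial : ℝ) * Real.Gamma (2*s) / Real.Gamma ((m:ℝ) + 2*s + 1) := by
    show b (m+1) (2*s-1) = _
    rw [b, Real.Gamma_nat_eq_factorial, show 2*s-1+1 = 2*s by ring]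
    congr 1
    push_cast
    ring_nf
  rw [hb]
  have hg : (0:ℝ) < Real.Gamma ((m:ℝ) + 2*s + 1) := Real.Gamma_pos_of_pos (by positivity)
  have hf1 : ((m+1).factorial : ℝ) ≠ 0 := by positivity
  push_cast
  have hF2 : ((m+2).factorial : ℝ) = ((m:ℝ)+2) * ((m+1).factorial : ℝ) := by
    rw [Nat.factorial_succ]; push_cast; ring
  rw [hF2]
  rw [show ((m:ℝ)+2) * (((m+1).factorial : ℝ) * Real.Gamma (2*s) / Real.Gamma ((m:ℝ) + 2*s + 1))
      = ((m:ℝ)+2) * ((m+1).factorial : ℝ) * Real.Gamma (2*s) / Real.Gamma ((m:ℝ) + 2*s + 1) by ring,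
    div_div_eq_mul_div]
  have hm1 : (m:ℝ) + 1 ≠ 0 := by positivity
  have hm1' : (m:ℝ) + 2 - 1 ≠ 0 := by intro h; apply hm1; linarith
  have hm2 : (m:ℝ) + 2 ≠ 0 := by positivity
  have hm3 : (m:ℝ) + 3 ≠ 0 := by positivity
  have h2' : Real.Gamma (2*s) ≠ 0 := h2.ne'
  have hg' : Real.Gamma ((m:ℝ) + 2*s + 1) ≠ 0 := hg.ne'
  field_simp
  ring
end

section
/- Let E[υ_n] = ∑_{k=1}^{n-1} π_{k,n}·2(H_k − 1) with π_{k,n} = 2(n+1)/((n−1)(k+2)(k+1)). Then E[υ_n] = (4/(n−1))(n − H_n) − 2, and this converges to 2 as n → ∞. -/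
/-!
The summand telescopes: since `H (k + 1) = H k + 1 / (k + 1)`,
`(H k - 1) / ((k + 2) (k + 1)) = H k / (k + 1) - H (k + 1) / (k + 2)`, and `piKN k n` is this
denominator times a factor depending on `n` only. The limit follows from `H n = log n + O(1)`.
-/

noncomputable def H (n : ℕ) : ℝ := ∑ i ∈ Finset.range n, (1 : ℝ) / (i + 1)

open Filter Finset Topology

lemma H_succ (n : ℕ) : H (n + 1) = H n + 1 / (n + 1) := by
  simp [H, sum_range_succ]

lemma H_eq_harmonic (n : ℕ) : H n = harmonic n := by
  simp [H, harmonic, one_div]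

lemma sum_Icc_H_sub_one_div (n : ℕ) :
    ∑ k ∈ Icc 1 n, (H k - 1) / (((k : ℝ) + 2) * ((k : ℝ) + 1))
      = 1 / 2 - H (n + 1) / ((n : ℝ) + 2) := by
  induction n with
  | zero => simp [H]
  | succ m ih =>
    rw [sum_Icc_succ_top (by omega), ih, H_succ (m + 1), H_succ m]
    push_cast
    field_simp
    ring

lemma piKN_mul_eq (k n : ℕ) :
    piKN k n * (2 * (H k - 1))
      = 4 * ((n : ℝ) + 1) / ((n : ℝ) - 1) * ((H k - 1) / (((k : ℝ) + 2) * ((k : ℝ) + 1))) := by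
  simp only [piKN, div_eq_mul_inv, mul_inv]
  ring

lemma sum_piKN_mul_eq (n : ℕ) (hn : 2 ≤ n) :
    ∑ k ∈ Icc 1 (n - 1), piKN k n * (2 * (H k - 1))
      = (4 / ((n : ℝ) - 1)) * ((n : ℝ) - H n) - 2 := by
  obtain ⟨m, rfl⟩ : ∃ m, n = m + 2 := ⟨n - 2, by omega⟩
  simp only [piKN_mul_eq, ← mul_sum, sum_Icc_H_sub_one_div]
  push_cast
  have hm : (m : ℝ) + 2 - 1 ≠ 0 := by rw [add_sub_assoc]; positivity
  field_simp
  ring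

lemma tendsto_H_div_atTop : Tendsto (fun n : ℕ => H n / n) atTop (𝓝 0) := by
  have hbounded : Tendsto (fun n : ℕ => (H n - Real.log n) / n) atTop (𝓝 0) := by
    simp only [H_eq_harmonic]
    exact Real.tendsto_harmonic_sub_log.div_atTop tendsto_natCast_atTop_atTop
  have hlog : Tendsto (fun n : ℕ => Real.log n / n) atTop (𝓝 0) := by
    simpa [Function.comp_def] using
      (Real.tendsto_pow_log_div_mul_add_atTop 1 0 1 one_ne_zero).comp tendsto_natCast_atTop_atTop
  simpa only [add_zero, ← add_div, sub_add_cancel] using hbounded.add hlog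

lemma tendsto_expectation_atTop :
    Tendsto (fun n : ℕ => (4 / ((n : ℝ) - 1)) * ((n : ℝ) - H n) - 2) atTop (𝓝 2) := by
  have hlim : Tendsto (fun n : ℕ => 4 * ((n : ℝ) / (n + -1)) * (1 - H n / n) - 2) atTop
      (𝓝 (4 * 1 * (1 - 0) - 2)) :=
    (((tendsto_natCast_div_add_atTop (-1 : ℝ)).const_mul 4).mul
      (tendsto_H_div_atTop.const_sub 1)).sub_const 2
  rw [show (4 : ℝ) * 1 * (1 - 0) - 2 = 2 by norm_num] at hlim
  refine hlim.congr' ?_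
  filter_upwards [eventually_ne_atTop 0] with n hn
  have hn' : (n : ℝ) ≠ 0 := by exact_mod_cast hn
  field_simp
  ring

theorem expectation_upsilon :
    (∀ n : ℕ, 2 ≤ n →
      ∑ k ∈ Finset.Icc 1 (n - 1), piKN k n * (2 * (H k - 1))
        = (4 / ((n : ℝ) - 1)) * ((n : ℝ) - H n) - 2) ∧
    Filter.Tendsto (fun n : ℕ => (4 / ((n : ℝ) - 1)) * ((n : ℝ) - H n) - 2)
      Filter.atTop (nhds 2) :=
  ⟨sum_piKN_mul_eq, tendsto_expectation_atTop⟩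
end

section
/- For independent Bernoulli random variables 1_i (i = 1,…,n−1) with P(1_i = 1) = 2/(i+1), and α > 0, the weighted sum ∑_{i=1}^{n-1} E[1_i]·b_{n,2α}/b_{i,2α} equals (1/α)(1 − (1+2α)b_{n,2α}), where b_{m,y} = Γ(m+1)Γ(y+1)/Γ(m+y+1). -/
lemma b_pos (n : ℕ) {y : ℝ} (hy : 0 < y) : 0 < b n y := by
  unfold b
  have h1 : (0:ℝ) < Real.Gamma ((n:ℝ) + 1) := Real.Gamma_pos_of_pos (by positivity)
  have h2 : (0:ℝ) < Real.Gamma (y + 1) := Real.Gamma_pos_of_pos (by positivity)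
  have h3 : (0:ℝ) < Real.Gamma ((n:ℝ) + y + 1) := Real.Gamma_pos_of_pos (by positivity)
  positivity

lemma b_succ (i : ℕ) {y : ℝ} (hy : 0 < y) :
    b (i+1) y = b i y * (((i:ℝ)+1)/((i:ℝ)+1+y)) := by
  unfold b
  have e1 : ((i+1:ℕ):ℝ) + 1 = ((i:ℝ) + 1) + 1 := by push_cast; ring
  have e2 : ((i+1:ℕ):ℝ) + y + 1 = ((i:ℝ) + y + 1) + 1 := by push_cast; ring
  have g1 : Real.Gamma (((i:ℝ)+1)+1) = ((i:ℝ)+1) * Real.Gamma ((i:ℝ)+1) :=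
    Real.Gamma_add_one (by positivity)
  have g2 : Real.Gamma (((i:ℝ)+y+1)+1) = ((i:ℝ)+y+1) * Real.Gamma ((i:ℝ)+y+1) :=
    Real.Gamma_add_one (by positivity)
  rw [e1, e2, g1, g2]
  have h1 : (0:ℝ) < Real.Gamma ((i:ℝ) + 1) := Real.Gamma_pos_of_pos (by positivity)
  have h3 : (0:ℝ) < Real.Gamma ((i:ℝ) + y + 1) := Real.Gamma_pos_of_pos (by positivity)
  field_simp
  ring

lemma b_one {y : ℝ} (hy : 0 < y) : b 1 y = 1 / (y + 1) := by
  unfold b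
  have e2 : ((1:ℕ):ℝ) + y + 1 = (y + 1) + 1 := by push_cast; ring
  have g2 : Real.Gamma ((y+1)+1) = (y+1) * Real.Gamma (y+1) :=
    Real.Gamma_add_one (by positivity)
  rw [e2, g2]
  have h2 : (0:ℝ) < Real.Gamma (y + 1) := Real.Gamma_pos_of_pos (by positivity)
  norm_num [Real.Gamma_two]
  field_simp

theorem weighted_bernoulli_sum (n : ℕ) (hn : 1 ≤ n) (α : ℝ) (hα : 0 < α) :
    ∑ i ∈ Finset.Icc 1 (n - 1), (2 / ((i : ℝ) + 1)) * (b n (2 * α) / b i (2 * α))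
      = (1 / α) * (1 - (1 + 2 * α) * b n (2 * α)) := by
  set y := 2 * α with hyd
  have hy0 : 0 < y := by positivity
  set F : ℕ → ℝ := fun i => (1/α) * (b n y / b i y) with hF
  have key : ∀ i : ℕ, 2/((i:ℝ)+1) * (b n y / b i y) = F (i+1) - F i := by
    intro i
    have hb := b_pos i hy0
    simp only [hF]
    rw [b_succ i hy0]
    have hi : (0:ℝ) < (i:ℝ)+1 := by positivity
    have hiy : (0:ℝ) < (i:ℝ)+1+y := by positivity
    field_simp
    ring
  have hIcc : Finset.Icc 1 (n-1) = Finset.Ico 1 n := by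
    ext x; simp [Finset.mem_Icc, Finset.mem_Ico]; omega
  rw [Finset.sum_congr rfl (fun i _ => key i), hIcc, Finset.sum_Ico_eq_sum_range]
  have hcomm : ∀ i, F (1 + i + 1) - F (1 + i) = F (i + 1 + 1) - F (i + 1) := by
    intro i; rw [add_comm 1 i]
  simp only [hcomm]
  rw [Finset.sum_range_sub (fun j => F (j+1))]
  have hn1 : n - 1 + 1 = n := by omega
  rw [hn1]
  have hbn := b_pos n hy0
  simp only [hF, b_one hy0, div_self hbn.ne']
  field_simp
  ring
end
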